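/- arXiv:math/0609794 — 3 statements merged into one kernel-verified Lean document; each statement's English description precedes it below -/
import Mathlib

section
/- Let (X,T) be a distal minimal topological dynamical system. Identify X⁸ with X⁴ × X⁴. Then 𝒬 satisfies the transitivity property: if 𝐮, 𝐯, 𝐰 ∈ 𝒫 are such that (𝐮,𝐯) ∈ 𝒬 and (𝐯,𝐰) ∈ 𝒬, then (𝐮,𝐰) ∈ 𝒬. -/
open Filter Topology

/-- The `n`-th iterate (`n : ℤ`) of a homeomorphism `T : X → X`. -/
def iterZ {X : Type*} [TopologicalSpace X] (T : X ≃ₜ X) (n : ℤ) : X → X :=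
  fun x => (T.toEquiv ^ n) x

section Defs

variable {X : Type*} [TopologicalSpace X]

/-- The set of parallelograms `𝒫`: the closure in `X⁴` of
`{(x, Tᵐx, Tⁿx, Tᵐ⁺ⁿx) : x ∈ X, m, n ∈ ℤ}`. -/
def Para (T : X ≃ₜ X) : Set (X × X × X × X) :=
  closure {q | ∃ (x : X) (m n : ℤ),
    q = (x, iterZ T m x, iterZ T n x, iterZ T (m + n) x)}

/-- The set of parallelepipeds `𝒬`: the closure in `X⁸ = X⁴ × X⁴` of
`{(x, Tᵐx, Tⁿx, Tᵐ⁺ⁿx, Tᵖx, Tᵐ⁺ᵖx, Tⁿ⁺ᵖx, Tᵐ⁺ⁿ⁺ᵖx) : x ∈ X, m, n, p ∈ ℤ}`. -/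
def Pip (T : X ≃ₜ X) : Set ((X × X × X × X) × (X × X × X × X)) :=
  closure {q | ∃ (x : X) (m n p : ℤ),
    q = ((x, iterZ T m x, iterZ T n x, iterZ T (m + n) x),
         (iterZ T p x, iterZ T (m + p) x, iterZ T (n + p) x, iterZ T (m + n + p) x))}

end Defs

section MetricDefs

variable {X : Type*} [MetricSpace X]

/-- `(X, T)` is transitive: some point has dense orbit `{Tⁿx : n ∈ ℤ}`. -/
def IsTransitive (T : X ≃ₜ X) : Prop :=
  ∃ x : X, Dense (Set.range fun n : ℤ => iterZ T n x)

/-- `(X, T)` is minimal: every point has dense orbit. -/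
def IsMinimal (T : X ≃ₜ X) : Prop :=
  ∀ x : X, Dense (Set.range fun n : ℤ => iterZ T n x)

/-- `(x, y)` is a proximal pair: `inf_{n ∈ ℤ} d(Tⁿx, Tⁿy) = 0`. -/
def ProximalPair (T : X ≃ₜ X) (x y : X) : Prop :=
  ⨅ n : ℤ, dist (iterZ T n x) (iterZ T n y) = 0

/-- `(X, T)` is distal: every pair of distinct points is distal,
i.e. `inf_{n ∈ ℤ} d(Tⁿx, Tⁿy) > 0`. -/
def IsDistal (T : X ≃ₜ X) : Prop :=
  ∀ x y : X, x ≠ y → 0 < ⨅ n : ℤ, dist (iterZ T n x) (iterZ T n y)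

/-- The regionally proximal relation `RP`. -/
def RP (T : X ≃ₜ X) (x y : X) : Prop :=
  ∀ ε > 0, ∃ x' y' : X, ∃ n : ℤ,
    dist x' x < ε ∧ dist y' y < ε ∧ dist (iterZ T n x') (iterZ T n y') < ε

/-- The doubly regionally proximal relation `RP²`. -/
def RP2 (T : X ≃ₜ X) (x y : X) : Prop :=
  ∀ ε > 0, ∃ x' y' : X, ∃ m n : ℤ,
    dist x' x < ε ∧ dist y' y < ε ∧
    dist (iterZ T m x') (iterZ T m y') < ε ∧
    dist (iterZ T n x') (iterZ T n y') < ε ∧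
    dist (iterZ T (m + n) x') (iterZ T (m + n) y') < ε

/-- The strongly doubly regionally proximal relation `RP²ₛ`. -/
def RP2S (T : X ≃ₜ X) (x y : X) : Prop :=
  ∀ ε > 0, ∃ x' y' : X, ∃ m n : ℤ,
    dist x' x < ε ∧ dist y' y < ε ∧
    dist (iterZ T m x') y < ε ∧ dist (iterZ T n x') y < ε ∧
    dist (iterZ T (m + n) x') y < ε ∧
    dist (iterZ T m y') y < ε ∧ dist (iterZ T n y') y < ε ∧
    dist (iterZ T (m + n) y') y < ε

end MetricDefs

set_option linter.unusedSectionVars false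

namespace Stmt12Aux

instance (X : Type*) [TopologicalSpace X] : TopologicalSpace (Function.End X) :=
  inferInstanceAs (TopologicalSpace (X → X))
instance (X : Type*) [TopologicalSpace X] [CompactSpace X] : CompactSpace (Function.End X) :=
  inferInstanceAs (CompactSpace (X → X))
instance (X : Type*) [TopologicalSpace X] [T2Space X] : T2Space (Function.End X) :=
  inferInstanceAs (T2Space (X → X))

variable {X : Type*} [TopologicalSpace X] (T : X ≃ₜ X)

lemma iterZ_add (a b : ℤ) (x : X) : iterZ T (a + b) x = iterZ T a (iterZ T b x) := by
  simp [iterZ, zpow_add, Equiv.Perm.mul_apply]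

lemma iterZ_zero (x : X) : iterZ T 0 x = x := by simp [iterZ]

lemma iterZ_one (x : X) : iterZ T 1 x = T x := by simp [iterZ]

lemma iterZ_neg_one (x : X) : iterZ T (-1) x = T.symm x := by
  simp [iterZ]

lemma iterZ_cont (n : ℤ) : Continuous (iterZ T n) := by
  induction n using Int.induction_on with
  | zero => rw [show iterZ T 0 = id from funext (iterZ_zero T)]; exact continuous_id
  | succ k ih =>
      have h : iterZ T (k + 1) = fun x => iterZ T k (T x) := by
        funext x
        have h2 := iterZ_add T k 1 x
        rw [iterZ_one] at h2
        exact h2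
      rw [h]; exact ih.comp T.continuous
  | pred k ih =>
      have h : iterZ T (-(k : ℤ) - 1) = fun x => iterZ T (-(k : ℤ)) (T.symm x) := by
        funext x
        have h2 := iterZ_add T (-(k : ℤ)) (-1) x
        rw [iterZ_neg_one] at h2
        rw [show (-(k : ℤ) - 1) = -(k : ℤ) + (-1) by ring]
        exact h2
      rw [h]; exact ih.comp T.symm.continuous

lemma iterZ_swap (a b : ℤ) (x : X) (h : a + b = 0) : iterZ T a (iterZ T b x) = x := by
  rw [← iterZ_add, h, iterZ_zero]

/-- helper: `T^a ∘ T^b = T^c ∘ T^d` when `a+b = c+d` -/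
lemma iterZ_comm (a b c d : ℤ) (x : X) (h : a + b = c + d) :
    iterZ T a (iterZ T b x) = iterZ T c (iterZ T d x) := by
  rw [← iterZ_add, ← iterZ_add, h]

/-- exponent pattern of the cube action -/
def ex (k m n p : ℤ) : Fin 8 → ℤ := fun i =>
  k + (if i.val % 2 = 1 then m else 0) + (if i.val / 2 % 2 = 1 then n else 0) +
    (if 4 ≤ i.val then p else 0)

/-- generating elements of the enveloping semigroup of the cube action -/
def Phi (k m n p : ℤ) : Fin 8 → Function.End X := fun i => iterZ T (ex k m n p i)

/-- generators -/
def EllGen : Set (Fin 8 → Function.End X) := {f | ∃ k m n p : ℤ, f = Phi T k m n p}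

/-- the enveloping semigroup of the cube action -/
def Ell : Set (Fin 8 → Function.End X) := closure (EllGen T)

lemma Phi_mul (k m n p k' m' n' p' : ℤ) :
    Phi T k m n p * Phi T k' m' n' p' = Phi T (k + k') (m + m') (n + n') (p + p') := by
  funext i x
  show iterZ T (ex k m n p i) (iterZ T (ex k' m' n' p' i) x) = iterZ T _ x
  rw [← iterZ_add]
  congr 1
  fin_cases i <;> simp [ex, Matrix.cons_val_succ] <;> ring

lemma cont_mul_right (g : Fin 8 → Function.End X) :
    Continuous (· * g : (Fin 8 → Function.End X) → (Fin 8 → Function.End X)) := by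
  apply continuous_pi; intro i
  apply continuous_pi (A := fun _ : X => X); intro x
  exact (continuous_apply (g i x)).comp (continuous_apply i)

lemma cont_mul_left (k m n p : ℤ) :
    Continuous (Phi T k m n p * · : (Fin 8 → Function.End X) → (Fin 8 → Function.End X)) := by
  apply continuous_pi; intro i
  apply continuous_pi (A := fun _ : X => X); intro x
  exact (iterZ_cont T _).comp ((continuous_apply x).comp (continuous_apply i))

lemma EllGen_subset_Ell : EllGen T ⊆ Ell T := subset_closure

lemma one_mem_EllGen : (1 : Fin 8 → Function.End X) ∈ EllGen T := by
  refine ⟨0, 0, 0, 0, ?_⟩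
  funext i x
  show x = iterZ T (ex 0 0 0 0 i) x
  fin_cases i <;> simp [ex, Matrix.cons_val_succ, iterZ_zero]

lemma Ell_nonempty : (Ell T).Nonempty := ⟨1, EllGen_subset_Ell T (one_mem_EllGen T)⟩

lemma mul_mem_Ell {f g : Fin 8 → Function.End X} (hf : f ∈ Ell T) (hg : g ∈ Ell T) :
    f * g ∈ Ell T := by
  have step1 : ∀ k m n p : ℤ, ∀ g' ∈ Ell T, Phi T k m n p * g' ∈ Ell T := by
    intro k m n p g' hg'
    have hsub : Ell T ⊆ (Phi T k m n p * ·) ⁻¹' Ell T := by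
      apply closure_minimal ?_ (IsClosed.preimage (cont_mul_left T k m n p) isClosed_closure)
      rintro _ ⟨k', m', n', p', rfl⟩
      show Phi T k m n p * Phi T k' m' n' p' ∈ Ell T
      rw [Phi_mul]
      exact EllGen_subset_Ell T ⟨k + k', m + m', n + n', p + p', rfl⟩
    exact hsub hg'
  have hsub : Ell T ⊆ (· * g) ⁻¹' Ell T := by
    apply closure_minimal ?_ (IsClosed.preimage (cont_mul_right g) isClosed_closure)
    rintro _ ⟨k, m, n, p, rfl⟩
    show Phi T k m n p * g ∈ Ell T
    exact step1 k m n p g hg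
  exact hsub hf


lemma Ell_compact [CompactSpace X] : IsCompact (Ell T) := isClosed_closure.isCompact

/-- the generic point parallelepiped -/
def gen8 (x : X) (m n p : ℤ) : (X × X × X × X) × (X × X × X × X) :=
  ((x, iterZ T m x, iterZ T n x, iterZ T (m + n) x),
   (iterZ T p x, iterZ T (m + p) x, iterZ T (n + p) x, iterZ T (m + n + p) x))

lemma Pip_eq : Pip T = closure {q | ∃ (x : X) (m n p : ℤ), q = gen8 T x m n p} := rfl

/-- the action of the enveloping semigroup on `X⁸` -/
def act (f : Fin 8 → Function.End X) (z : (X × X × X × X) × (X × X × X × X)) :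
    (X × X × X × X) × (X × X × X × X) :=
  ((f 0 z.1.1, f 1 z.1.2.1, f 2 z.1.2.2.1, f 3 z.1.2.2.2),
   (f 4 z.2.1, f 5 z.2.2.1, f 6 z.2.2.2.1, f 7 z.2.2.2.2))

lemma act_mul (f g : Fin 8 → Function.End X) (z : (X × X × X × X) × (X × X × X × X)) :
    act (f * g) z = act f (act g z) := rfl

lemma act_one (z : (X × X × X × X) × (X × X × X × X)) :
    act (1 : Fin 8 → Function.End X) z = z := rfl

lemma act_cont_fixed (z : (X × X × X × X) × (X × X × X × X)) :
    Continuous fun f : Fin 8 → Function.End X => act f z := by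
  have ev : ∀ (i : Fin 8) (y : X), Continuous fun f : Fin 8 → Function.End X => f i y :=
    fun i y => (continuous_apply y).comp (continuous_apply i)
  exact ((ev 0 _).prodMk ((ev 1 _).prodMk ((ev 2 _).prodMk (ev 3 _)))).prodMk
    ((ev 4 _).prodMk ((ev 5 _).prodMk ((ev 6 _).prodMk (ev 7 _))))

lemma gen8_cont (m n p : ℤ) : Continuous fun x : X => gen8 T x m n p := by
  unfold gen8
  exact (continuous_id.prodMk ((iterZ_cont T m).prodMk
      ((iterZ_cont T n).prodMk (iterZ_cont T (m + n))))).prodMk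
    ((iterZ_cont T p).prodMk ((iterZ_cont T (m + p)).prodMk
      ((iterZ_cont T (n + p)).prodMk (iterZ_cont T (m + n + p)))))

lemma Phi_act_cont (k m n p : ℤ) :
    Continuous (act (Phi T k m n p) :
      (X × X × X × X) × (X × X × X × X) → (X × X × X × X) × (X × X × X × X)) := by
  unfold act Phi
  refine Continuous.prodMk (Continuous.prodMk ?_ (Continuous.prodMk ?_
      (Continuous.prodMk ?_ ?_))) (Continuous.prodMk ?_ (Continuous.prodMk ?_
      (Continuous.prodMk ?_ ?_))) <;>
    exact (iterZ_cont T _).comp (by fun_prop)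

lemma exv0 (k m n p : ℤ) : ex k m n p 0 = k + 0 + 0 + 0 := rfl
lemma exv1 (k m n p : ℤ) : ex k m n p 1 = k + m + 0 + 0 := rfl
lemma exv2 (k m n p : ℤ) : ex k m n p 2 = k + 0 + n + 0 := rfl
lemma exv3 (k m n p : ℤ) : ex k m n p 3 = k + m + n + 0 := rfl
lemma exv4 (k m n p : ℤ) : ex k m n p 4 = k + 0 + 0 + p := rfl
lemma exv5 (k m n p : ℤ) : ex k m n p 5 = k + m + 0 + p := rfl
lemma exv6 (k m n p : ℤ) : ex k m n p 6 = k + 0 + n + p := rfl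
lemma exv7 (k m n p : ℤ) : ex k m n p 7 = k + m + n + p := rfl

lemma act_Phi_gen8 (k a b c : ℤ) (x : X) (m n p : ℤ) :
    act (Phi T k a b c) (gen8 T x m n p) =
      gen8 T (iterZ T k x) (m + a) (n + b) (p + c) := by
  have H : ∀ (c₁ a₁ b₁ d₁ : ℤ), c₁ + a₁ = b₁ + d₁ →
      iterZ T c₁ (iterZ T a₁ x) = iterZ T b₁ (iterZ T d₁ x) :=
    fun c₁ a₁ b₁ d₁ h => iterZ_comm T c₁ a₁ b₁ d₁ x h
  unfold act Phi gen8
  simp only [Prod.mk.injEq]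
  refine ⟨⟨?_, ?_, ?_, ?_⟩, ?_, ?_, ?_, ?_⟩
  · simp [exv0]
  all_goals refine H _ _ _ _ ?_
  all_goals simp only [exv0, exv1, exv2, exv3, exv4, exv5, exv6, exv7]
  all_goals ring

lemma act_gen_mem_Pip (k m n p : ℤ) {z : (X × X × X × X) × (X × X × X × X)}
    (hz : z ∈ Pip T) : act (Phi T k m n p) z ∈ Pip T := by
  rw [Pip_eq] at hz ⊢
  have h1 : act (Phi T k m n p) '' {q | ∃ (x : X) (m' n' p' : ℤ), q = gen8 T x m' n' p'} ⊆
      {q | ∃ (x : X) (m' n' p' : ℤ), q = gen8 T x m' n' p'} := by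
    rintro _ ⟨_, ⟨x, m', n', p', rfl⟩, rfl⟩
    exact ⟨iterZ T k x, m' + m, n' + n, p' + p, act_Phi_gen8 T k m n p x m' n' p'⟩
  have h2 := image_closure_subset_closure_image (s := {q | ∃ (x : X) (m' n' p' : ℤ),
      q = gen8 T x m' n' p'}) (Phi_act_cont T k m n p)
  have h3 : act (Phi T k m n p) z ∈ closure (act (Phi T k m n p) ''
      {q | ∃ (x : X) (m' n' p' : ℤ), q = gen8 T x m' n' p'}) := by
    have := Set.mem_image_of_mem (act (Phi T k m n p)) hz
    exact h2 this
  exact closure_minimal (h1.trans subset_closure) isClosed_closure h3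

lemma Pip_isClosed : IsClosed (Pip T) := by rw [Pip_eq]; exact isClosed_closure

lemma Ell_act_mem_Pip {q : Fin 8 → Function.End X} {z : (X × X × X × X) × (X × X × X × X)}
    (hq : q ∈ Ell T) (hz : z ∈ Pip T) : act q z ∈ Pip T := by
  have hsub : Ell T ⊆ (fun f => act f z) ⁻¹' Pip T := by
    apply closure_minimal ?_ (IsClosed.preimage (act_cont_fixed z) (Pip_isClosed T))
    rintro _ ⟨k, m, n, p, rfl⟩
    exact act_gen_mem_Pip T k m n p hz

  exact hsub hq

def d2i : Fin 8 → Fin 8 := fun i => ⟨4 + i.val % 4, by omega⟩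

/-- doubling the second face -/
def d2 (f : Fin 8 → Function.End X) : Fin 8 → Function.End X := fun i => f (d2i i)

lemma d2_Phi (k m n p : ℤ) : d2 (Phi T k m n p) = Phi T (k + p) m n 0 := by
  funext i
  show iterZ T (ex k m n p (d2i i)) = iterZ T (ex (k + p) m n 0 i)
  congr 1
  rcases i with ⟨iv, hiv⟩
  unfold d2i ex
  interval_cases iv <;> simp <;> ring

lemma d2_cont : Continuous (d2 : (Fin 8 → Function.End X) → Fin 8 → Function.End X) := by
  apply continuous_pi; intro i; exact continuous_apply (d2i i)

lemma d2_mem {q : Fin 8 → Function.End X} (hq : q ∈ Ell T) : d2 q ∈ Ell T := by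
  have hsub : Ell T ⊆ d2 ⁻¹' Ell T := by
    apply closure_minimal ?_ (IsClosed.preimage d2_cont isClosed_closure)
    rintro _ ⟨k, m, n, p, rfl⟩
    show d2 (Phi T k m n p) ∈ Ell T
    rw [d2_Phi]
    exact EllGen_subset_Ell T ⟨_, _, _, _, rfl⟩
  exact hsub hq

section Metric

variable {Y : Type*} [MetricSpace Y] (S : Y ≃ₜ Y)

lemma idem_eq_one (hdistal : IsDistal S) {e : Fin 8 → Function.End Y}
    (he : e ∈ Ell S) (hee : e * e = e) : e = 1 := by
  funext i x
  show e i x = x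
  by_contra hne
  have hpos := hdistal (e i x) x hne
  set ε := ⨅ n : ℤ, dist (iterZ S n (e i x)) (iterZ S n x) with hε
  have heex : e i (e i x) = e i x := congrFun (congrFun hee i) x
  set U : Set (Fin 8 → Function.End Y) :=
    {f | dist (f i x) (e i x) < ε / 2} ∩ {f | dist (f i (e i x)) (e i (e i x)) < ε / 2} with hU
  have ev : ∀ y : Y, Continuous fun f : Fin 8 → Function.End Y => f i y :=
    fun y => (continuous_apply y).comp (continuous_apply i)
  have hUopen : IsOpen U := by
    refine IsOpen.inter ?_ ?_
    · exact isOpen_lt (Continuous.dist (ev x) continuous_const) continuous_const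
    · exact isOpen_lt (Continuous.dist (ev (e i x)) continuous_const) continuous_const
  have heU : e ∈ U := by
    constructor <;> · show dist _ _ < ε / 2; simp; linarith
  obtain ⟨f, hfU, hfgen⟩ := _root_.mem_closure_iff.mp he U hUopen heU
  obtain ⟨k, m, n, p, rfl⟩ := hfgen
  set n₀ := ex k m n p i with hn₀
  have h1 : dist (iterZ S n₀ x) (e i x) < ε / 2 := hfU.1
  have h2 : dist (iterZ S n₀ (e i x)) (e i x) < ε / 2 := by
    have := hfU.2
    show dist _ _ < ε / 2
    rwa [heex] at this
  have h3 : dist (iterZ S n₀ (e i x)) (iterZ S n₀ x) < ε := by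
    calc dist (iterZ S n₀ (e i x)) (iterZ S n₀ x)
        ≤ dist (iterZ S n₀ (e i x)) (e i x) + dist (e i x) (iterZ S n₀ x) := dist_triangle _ _ _
      _ < ε / 2 + ε / 2 := by rw [dist_comm (e i x)]; exact add_lt_add h2 h1
      _ = ε := by ring
  have h4 : ε ≤ dist (iterZ S n₀ (e i x)) (iterZ S n₀ x) := by
    apply ciInf_le ⟨0, ?_⟩ n₀
    rintro d ⟨n', rfl⟩
    exact dist_nonneg
  linarith

lemma exists_inv [CompactSpace Y] (hdistal : IsDistal S) {q : Fin 8 → Function.End Y}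
    (hq : q ∈ Ell S) : ∃ r ∈ Ell S, r * q = 1 ∧ q * r = 1 := by
  have hleft : ∀ q' ∈ Ell S, ∃ r ∈ Ell S, r * q' = 1 := by
    intro q' hq'
    set s : Set (Fin 8 → Function.End Y) := (· * q') '' Ell S with hs
    have hsne : s.Nonempty :=
      ⟨1 * q', ⟨1, EllGen_subset_Ell S (one_mem_EllGen S), rfl⟩⟩
    have hscomp : IsCompact s := (Ell_compact S).image (cont_mul_right q')
    have hssub : s ⊆ Ell S := by
      rintro _ ⟨f, hf, rfl⟩
      exact mul_mem_Ell S hf hq'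
    have hsmul : ∀ x ∈ s, ∀ y ∈ s, x * y ∈ s := by
      rintro _ ⟨f, hf, rfl⟩ _ ⟨g, hg, rfl⟩
      refine ⟨f * q' * g, mul_mem_Ell S (mul_mem_Ell S hf hq') hg, ?_⟩
      show f * q' * g * q' = (f * q') * (g * q')
      rw [mul_assoc (f * q') g q']
    obtain ⟨e, hes, hee⟩ :=
      exists_idempotent_in_compact_subsemigroup cont_mul_right s hsne hscomp hsmul
    have he1 : e = 1 := idem_eq_one S hdistal (hssub hes) hee
    obtain ⟨r, hr, hrq⟩ := hes
    refine ⟨r, hr, ?_⟩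
    have : r * q' = e := hrq
    rw [this, he1]
  obtain ⟨r, hr, hrq⟩ := hleft q hq
  obtain ⟨t, ht, htr⟩ := hleft r hr
  have htq : t = q := by
    calc t = t * 1 := (mul_one t).symm
      _ = t * (r * q) := by rw [hrq]
      _ = t * r * q := (mul_assoc t r q).symm
      _ = 1 * q := by rw [htr]
      _ = q := one_mul q
  exact ⟨r, hr, hrq, by rw [← htq]; exact htr⟩

lemma Pip_subset_orbit [CompactSpace Y] (hmin : IsMinimal S) (x₀ : Y) :
    Pip S ⊆ (fun q => act q (gen8 S x₀ 0 0 0)) '' Ell S := by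
  set z₀ := gen8 S x₀ 0 0 0 with hz₀
  set Or := (fun q => act q z₀) '' Ell S with hOr
  have hOrcomp : IsCompact Or := (Ell_compact S).image (act_cont_fixed z₀)
  have hOrclosed : IsClosed Or := hOrcomp.isClosed
  have hgen : {q | ∃ (x : Y) (m n p : ℤ), q = gen8 S x m n p} ⊆ Or := by
    rintro _ ⟨x, m, n, p, rfl⟩
    have hx : x ∈ closure (Set.range fun k : ℤ => iterZ S k x₀) := hmin x₀ x
    have hrange : (fun y => gen8 S y m n p) '' (Set.range fun k : ℤ => iterZ S k x₀) ⊆ Or := by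
      rintro _ ⟨_, ⟨k, rfl⟩, rfl⟩
      refine ⟨Phi S k m n p, EllGen_subset_Ell S ⟨k, m, n, p, rfl⟩, ?_⟩
      show act (Phi S k m n p) z₀ = _
      rw [hz₀, act_Phi_gen8]
      simp
    have h2 : gen8 S x m n p ∈ (fun y => gen8 S y m n p) ''
        closure (Set.range fun k : ℤ => iterZ S k x₀) := ⟨x, hx, rfl⟩
    have h3 := image_closure_subset_closure_image
      (s := Set.range fun k : ℤ => iterZ S k x₀) (gen8_cont S m n p) h2
    have h4 := closure_mono hrange h3
    rwa [hOrclosed.closure_eq] at h4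
  rw [Pip_eq]
  exact closure_minimal hgen hOrclosed

lemma diag_mem_Pip {v : Y × Y × Y × Y} (hv : v ∈ Para S) : (v, v) ∈ Pip S := by
  have hδ : Continuous fun y : Y × Y × Y × Y => (y, y) := continuous_id.prodMk continuous_id
  have h1 : (fun y : Y × Y × Y × Y => (y, y)) ''
      {q | ∃ (x : Y) (m n : ℤ), q = (x, iterZ S m x, iterZ S n x, iterZ S (m + n) x)} ⊆
      {q | ∃ (x : Y) (m n p : ℤ), q = gen8 S x m n p} := by
    rintro _ ⟨_, ⟨x, m, n, rfl⟩, rfl⟩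
    refine ⟨x, m, n, 0, ?_⟩
    unfold gen8
    simp [iterZ_zero]
  have h2 : (v, v) ∈ (fun y : Y × Y × Y × Y => (y, y)) '' closure
      {q | ∃ (x : Y) (m n : ℤ), q = (x, iterZ S m x, iterZ S n x, iterZ S (m + n) x)} :=
    ⟨v, hv, rfl⟩
  have h3 := image_closure_subset_closure_image
    (s := {q | ∃ (x : Y) (m n : ℤ), q = (x, iterZ S m x, iterZ S n x, iterZ S (m + n) x)}) hδ h2
  have h4 := closure_mono (h1.trans subset_closure) h3
  rw [closure_closure] at h4
  rw [Pip_eq]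
  exact h4

end Metric

end Stmt12Aux

/-- Transitivity property of `𝒬` in a distal minimal system. -/
theorem stmt12 {X : Type*} [MetricSpace X] [CompactSpace X] [Nonempty X]
    (T : X ≃ₜ X) (hdistal : IsDistal T) (hmin : IsMinimal T)
    (u v w : X × X × X × X) (hu : u ∈ Para T) (hv : v ∈ Para T) (hw : w ∈ Para T)
    (huv : (u, v) ∈ Pip T) (hvw : (v, w) ∈ Pip T) :
    (u, w) ∈ Pip T := by
  classical
  open Stmt12Aux in
  obtain ⟨v1, v2, v3, v4⟩ := v
  obtain ⟨u1, u2, u3, u4⟩ := u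
  obtain ⟨w1, w2, w3, w4⟩ := w
  set x₀ : X := Classical.arbitrary X with hx₀
  obtain ⟨a, ha, haz'⟩ := Pip_subset_orbit T hmin x₀ huv
  have haz : act a (gen8 T x₀ 0 0 0) = ((u1, u2, u3, u4), (v1, v2, v3, v4)) := haz'
  obtain ⟨b, hb, hbz'⟩ := Pip_subset_orbit T hmin x₀ (diag_mem_Pip T hv)
  have hbz : act b (gen8 T x₀ 0 0 0) = ((v1, v2, v3, v4), (v1, v2, v3, v4)) := hbz'
  obtain ⟨b', hb'mem, hb'b, hbb'⟩ := exists_inv T hdistal hb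
  set q := a * b' with hqdef
  have hqmem : q ∈ Ell T := mul_mem_Ell T ha hb'mem
  have hqv : act q ((v1, v2, v3, v4), (v1, v2, v3, v4)) = ((u1, u2, u3, u4), (v1, v2, v3, v4)) := by
    rw [← hbz, ← act_mul, hqdef, mul_assoc, hb'b, mul_one, haz]
  obtain ⟨r, hrmem, hr1, hr2⟩ := exists_inv T hdistal (d2_mem T hqmem)
  have hgmem : q * r ∈ Ell T := mul_mem_Ell T hqmem hrmem
  have hfinal := Ell_act_mem_Pip T hgmem hvw
  have h1 : q 0 v1 = u1 := congrArg (fun z => z.1.1) hqv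
  have h2 : q 1 v2 = u2 := congrArg (fun z => z.1.2.1) hqv
  have h3 : q 2 v3 = u3 := congrArg (fun z => z.1.2.2.1) hqv
  have h4 : q 3 v4 = u4 := congrArg (fun z => z.1.2.2.2) hqv
  have h5 : q 4 v1 = v1 := congrArg (fun z => z.2.1) hqv
  have h6 : q 5 v2 = v2 := congrArg (fun z => z.2.2.1) hqv
  have h7 : q 6 v3 = v3 := congrArg (fun z => z.2.2.2.1) hqv
  have h8 : q 7 v4 = v4 := congrArg (fun z => z.2.2.2.2) hqv
  have hinv1 : ∀ (i : Fin 8) (y : X), r i (d2 q i y) = y := fun i y =>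
    congrFun (congrFun hr1 i) y
  have hinv2 : ∀ (i : Fin 8) (y : X), d2 q i (r i y) = y := fun i y =>
    congrFun (congrFun hr2 i) y
  have key : act (q * r) ((v1, v2, v3, v4), (w1, w2, w3, w4)) =
      ((u1, u2, u3, u4), (w1, w2, w3, w4)) := by
    show ((q 0 (r 0 v1), q 1 (r 1 v2), q 2 (r 2 v3), q 3 (r 3 v4)),
          (q 4 (r 4 w1), q 5 (r 5 w2), q 6 (r 6 w3), q 7 (r 7 w4))) = _
    have hv1 : r 0 v1 = v1 := by
      conv_lhs => rw [← h5]
      exact hinv1 0 v1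
    have hv2 : r 1 v2 = v2 := by
      conv_lhs => rw [← h6]
      exact hinv1 1 v2
    have hv3 : r 2 v3 = v3 := by
      conv_lhs => rw [← h7]
      exact hinv1 2 v3
    have hv4 : r 3 v4 = v4 := by
      conv_lhs => rw [← h8]
      exact hinv1 3 v4
    have hw1 : q 4 (r 4 w1) = w1 := hinv2 4 w1
    have hw2 : q 5 (r 5 w2) = w2 := hinv2 5 w2
    have hw3 : q 6 (r 6 w3) = w3 := hinv2 6 w3
    have hw4 : q 7 (r 7 w4) = w4 := hinv2 7 w4
    rw [hv1, hv2, hv3, hv4, h1, h2, h3, h4, hw1, hw2, hw3, hw4]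
  rwa [key] at hfinal
end

section
/- Let (X,T) be a minimal topological dynamical system that is weakly mixing, i.e., the product system (X × X, T × T) is transitive. Then 𝒫 = X⁴ and 𝒬 = X⁸; consequently, the relations RP, RP² and RP²ₛ all have graph equal to X × X. -/
open Filter Topology

section AuxLemmas

variable {X : Type*}

lemma iterZ_add [TopologicalSpace X] (T : X ≃ₜ X) (m n : ℤ) (x : X) :
    iterZ T m (iterZ T n x) = iterZ T (m + n) x := by
  simp [iterZ, zpow_add, Equiv.Perm.mul_apply]

lemma iterZ_congr [TopologicalSpace X] (T : X ≃ₜ X) {m n : ℤ} (h : m = n) (x : X) :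
    iterZ T m x = iterZ T n x := by rw [h]

lemma continuous_natPow_equiv [TopologicalSpace X] (T : X ≃ₜ X) (k : ℕ) :
    Continuous fun x => (T.toEquiv ^ k) x := by
  induction k with
  | zero => simpa using continuous_id'
  | succ k ih =>
      have h : (fun x => (T.toEquiv ^ (k + 1)) x)
          = fun x => (T.toEquiv ^ k) (T.toEquiv x) := by
        funext x
        rw [pow_succ, Equiv.Perm.mul_apply]
      rw [h]
      exact ih.comp T.continuous

lemma continuous_iterZ [TopologicalSpace X] (T : X ≃ₜ X) (n : ℤ) :
    Continuous (iterZ T n) := by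
  unfold iterZ
  cases n with
  | ofNat k => simpa [zpow_natCast] using continuous_natPow_equiv T k
  | negSucc k =>
      have h : T.toEquiv ^ (Int.negSucc k) = T.symm.toEquiv ^ (k + 1) := by
        rw [zpow_negSucc, ← inv_pow]
        rfl
      simpa [h] using continuous_natPow_equiv T.symm (k + 1)

variable [MetricSpace X]

/-- Minimality: there is a point of `A` sent into `B` by some power. -/
lemma hit1 (T : X ≃ₜ X) (hmin : IsMinimal T) {A B : Set X}
    (hAne : A.Nonempty) (hB : IsOpen B) (hBne : B.Nonempty) :
    ∃ m : ℤ, ∃ x ∈ A, iterZ T m x ∈ B := by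
  obtain ⟨u, hu⟩ := hAne
  obtain ⟨_, ⟨m, rfl⟩, hm⟩ := (hmin u).exists_mem_open hB hBne
  exact ⟨m, u, hu, hm⟩

/-- Weak mixing: simultaneous hitting times for two pairs of open sets. -/
lemma hit2 (T : X ≃ₜ X)
    (hwm : ∃ p : X × X, Dense (Set.range fun n : ℤ => (iterZ T n p.1, iterZ T n p.2)))
    {A1 B1 A2 B2 : Set X}
    (hA1 : IsOpen A1) (hA1n : A1.Nonempty) (hB1 : IsOpen B1) (hB1n : B1.Nonempty)
    (hA2 : IsOpen A2) (hA2n : A2.Nonempty) (hB2 : IsOpen B2) (hB2n : B2.Nonempty) :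
    ∃ m : ℤ, (∃ x ∈ A1, iterZ T m x ∈ B1) ∧ (∃ x ∈ A2, iterZ T m x ∈ B2) := by
  obtain ⟨p, hd⟩ := hwm
  obtain ⟨_, ⟨k, rfl⟩, hk⟩ := hd.exists_mem_open (hA1.prod hA2) (hA1n.prod hA2n)
  obtain ⟨_, ⟨l, rfl⟩, hl⟩ := hd.exists_mem_open (hB1.prod hB2) (hB1n.prod hB2n)
  rw [Set.mem_prod] at hk hl
  refine ⟨l - k, ⟨iterZ T k p.1, hk.1, ?_⟩, ⟨iterZ T k p.2, hk.2, ?_⟩⟩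
  · rw [iterZ_add, sub_add_cancel]; exact hl.1
  · rw [iterZ_add, sub_add_cancel]; exact hl.2

/-- Furstenberg's trick: the simultaneous-hitting sets form a filter base. -/
lemma furst (T : X ≃ₜ X)
    (hwm : ∃ p : X × X, Dense (Set.range fun n : ℤ => (iterZ T n p.1, iterZ T n p.2)))
    {A1 B1 A2 B2 : Set X}
    (hA1 : IsOpen A1) (hA1n : A1.Nonempty) (hB1 : IsOpen B1) (hB1n : B1.Nonempty)
    (hA2 : IsOpen A2) (hA2n : A2.Nonempty) (hB2 : IsOpen B2) (hB2n : B2.Nonempty) :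
    ∃ U V : Set X, IsOpen U ∧ U.Nonempty ∧ IsOpen V ∧ V.Nonempty ∧
      ∀ m : ℤ, (∃ x ∈ U, iterZ T m x ∈ V) →
        (∃ x ∈ A1, iterZ T m x ∈ B1) ∧ (∃ x ∈ A2, iterZ T m x ∈ B2) := by
  obtain ⟨n, ⟨u, hu, hu'⟩, ⟨v, hv, hv'⟩⟩ :=
    hit2 T hwm hA1 hA1n hA2 hA2n hB1 hB1n hB2 hB2n
  refine ⟨A1 ∩ (iterZ T n) ⁻¹' A2, B1 ∩ (iterZ T n) ⁻¹' B2,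
    hA1.inter (hA2.preimage (continuous_iterZ T n)), ⟨u, hu, hu'⟩,
    hB1.inter (hB2.preimage (continuous_iterZ T n)), ⟨v, hv, hv'⟩, ?_⟩
  rintro m ⟨x, ⟨hx1, hx2⟩, hy1, hy2⟩
  refine ⟨⟨x, hx1, hy1⟩, ⟨iterZ T n x, hx2, ?_⟩⟩
  rw [iterZ_add, add_comm, ← iterZ_add]
  exact hy2

/-- Simultaneous hitting times for four pairs of open sets. -/
lemma hit4 (T : X ≃ₜ X)
    (hwm : ∃ p : X × X, Dense (Set.range fun n : ℤ => (iterZ T n p.1, iterZ T n p.2)))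
    {A1 B1 A2 B2 A3 B3 A4 B4 : Set X}
    (hA1 : IsOpen A1) (hA1n : A1.Nonempty) (hB1 : IsOpen B1) (hB1n : B1.Nonempty)
    (hA2 : IsOpen A2) (hA2n : A2.Nonempty) (hB2 : IsOpen B2) (hB2n : B2.Nonempty)
    (hA3 : IsOpen A3) (hA3n : A3.Nonempty) (hB3 : IsOpen B3) (hB3n : B3.Nonempty)
    (hA4 : IsOpen A4) (hA4n : A4.Nonempty) (hB4 : IsOpen B4) (hB4n : B4.Nonempty) :
    ∃ m : ℤ, (∃ x ∈ A1, iterZ T m x ∈ B1) ∧ (∃ x ∈ A2, iterZ T m x ∈ B2) ∧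
      (∃ x ∈ A3, iterZ T m x ∈ B3) ∧ (∃ x ∈ A4, iterZ T m x ∈ B4) := by
  obtain ⟨U, V, hU, hUn, hV, hVn, hUV⟩ :=
    furst T hwm hA1 hA1n hB1 hB1n hA2 hA2n hB2 hB2n
  obtain ⟨U', V', hU', hUn', hV', hVn', hUV'⟩ :=
    furst T hwm hA3 hA3n hB3 hB3n hA4 hA4n hB4 hB4n
  obtain ⟨m, h1, h2⟩ := hit2 T hwm hU hUn hV hVn hU' hUn' hV' hVn'
  obtain ⟨c1, c2⟩ := hUV m h1
  obtain ⟨c3, c4⟩ := hUV' m h2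
  exact ⟨m, c1, c2, c3, c4⟩

/-- Parallelogram hitting: given four nonempty open sets, some orbit configuration
`(x, Tᵐx, Tⁿx, Tᵐ⁺ⁿx)` lies in their product. -/
lemma para_hit (T : X ≃ₜ X) (hmin : IsMinimal T)
    (hwm : ∃ p : X × X, Dense (Set.range fun n : ℤ => (iterZ T n p.1, iterZ T n p.2)))
    {A B C D : Set X}
    (hA : IsOpen A) (hAn : A.Nonempty) (hB : IsOpen B) (hBn : B.Nonempty)
    (hC : IsOpen C) (hCn : C.Nonempty) (hD : IsOpen D) (hDn : D.Nonempty) :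
    ∃ (x : X) (m n : ℤ), x ∈ A ∧ iterZ T m x ∈ B ∧ iterZ T n x ∈ C ∧
      iterZ T (m + n) x ∈ D := by
  obtain ⟨n, ⟨u, hu, hu'⟩, ⟨v, hv, hv'⟩⟩ :=
    hit2 T hwm hA hAn hC hCn hB hBn hD hDn
  have hA' : IsOpen (A ∩ (iterZ T n) ⁻¹' C) :=
    hA.inter (hC.preimage (continuous_iterZ T n))
  have hB' : IsOpen (B ∩ (iterZ T n) ⁻¹' D) :=
    hB.inter (hD.preimage (continuous_iterZ T n))
  obtain ⟨m, x, ⟨hx1, hx2⟩, hx3, hx4⟩ :=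
    hit1 T hmin (A := A ∩ (iterZ T n) ⁻¹' C) (B := B ∩ (iterZ T n) ⁻¹' D)
      ⟨u, hu, hu'⟩ hB' ⟨v, hv, hv'⟩
  refine ⟨x, m, n, hx1, hx3, hx2, ?_⟩
  rw [show m + n = n + m from add_comm m n, ← iterZ_add]
  exact hx4

/-- Parallelepiped hitting: given eight nonempty open sets, some orbit configuration
lies in their product. -/
lemma pip_hit (T : X ≃ₜ X) (hmin : IsMinimal T)
    (hwm : ∃ p : X × X, Dense (Set.range fun n : ℤ => (iterZ T n p.1, iterZ T n p.2)))
    {A B C D E F G H : Set X}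
    (hA : IsOpen A) (hAn : A.Nonempty) (hB : IsOpen B) (hBn : B.Nonempty)
    (hC : IsOpen C) (hCn : C.Nonempty) (hD : IsOpen D) (hDn : D.Nonempty)
    (hE : IsOpen E) (hEn : E.Nonempty) (hF : IsOpen F) (hFn : F.Nonempty)
    (hG : IsOpen G) (hGn : G.Nonempty) (hH : IsOpen H) (hHn : H.Nonempty) :
    ∃ (x : X) (m n p : ℤ), x ∈ A ∧ iterZ T m x ∈ B ∧ iterZ T n x ∈ C ∧
      iterZ T (m + n) x ∈ D ∧ iterZ T p x ∈ E ∧ iterZ T (m + p) x ∈ F ∧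
      iterZ T (n + p) x ∈ G ∧ iterZ T (m + n + p) x ∈ H := by
  obtain ⟨p, ⟨u1, hu1, hu1'⟩, ⟨u2, hu2, hu2'⟩, ⟨u3, hu3, hu3'⟩, ⟨u4, hu4, hu4'⟩⟩ :=
    hit4 T hwm hA hAn hE hEn hB hBn hF hFn hC hCn hG hGn hD hDn hH hHn
  have hpre : ∀ S : Set X, IsOpen S → IsOpen ((iterZ T p) ⁻¹' S) :=
    fun S hS => hS.preimage (continuous_iterZ T p)
  obtain ⟨x, m, n, ⟨hx1, hx1'⟩, ⟨hx2, hx2'⟩, ⟨hx3, hx3'⟩, hx4, hx4'⟩ :=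
    para_hit T hmin hwm (hA.inter (hpre E hE)) ⟨u1, hu1, hu1'⟩
      (hB.inter (hpre F hF)) ⟨u2, hu2, hu2'⟩
      (hC.inter (hpre G hG)) ⟨u3, hu3, hu3'⟩
      (hD.inter (hpre H hH)) ⟨u4, hu4, hu4'⟩
  refine ⟨x, m, n, p, hx1, hx2, hx3, hx4, hx1', ?_, ?_, ?_⟩
  · rw [show m + p = p + m from add_comm m p, ← iterZ_add]; exact hx2'
  · rw [show n + p = p + n from add_comm n p, ← iterZ_add]; exact hx3'
  · rw [show m + n + p = p + (m + n) from by ring, ← iterZ_add]; exact hx4'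

end AuxLemmas

/-- In a weakly mixing minimal system, `𝒫 = X⁴`, `𝒬 = X⁸`, and the relations
`RP`, `RP²`, `RP²ₛ` are all trivial. -/
theorem stmt17 {X : Type*} [MetricSpace X] [CompactSpace X] [Nonempty X]
    (T : X ≃ₜ X) (hmin : IsMinimal T)
    (hwm : ∃ p : X × X, Dense (Set.range fun n : ℤ => (iterZ T n p.1, iterZ T n p.2))) :
    Para T = Set.univ ∧ Pip T = Set.univ ∧
    (∀ x y : X, RP T x y) ∧ (∀ x y : X, RP2 T x y) ∧ (∀ x y : X, RP2S T x y) := by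
  have para_d : ∀ (a b c d : X) (ε : ℝ), 0 < ε →
      ∃ (x : X) (m n : ℤ), dist x a < ε ∧ dist (iterZ T m x) b < ε ∧
        dist (iterZ T n x) c < ε ∧ dist (iterZ T (m + n) x) d < ε := by
    intro a b c d ε hε
    obtain ⟨x, m, n, h1, h2, h3, h4⟩ :=
      para_hit T hmin hwm
        Metric.isOpen_ball (Metric.nonempty_ball.mpr hε)
        Metric.isOpen_ball (Metric.nonempty_ball.mpr hε)
        Metric.isOpen_ball (Metric.nonempty_ball.mpr hε)
        (Metric.isOpen_ball (x := d)) (Metric.nonempty_ball.mpr hε)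
    exact ⟨x, m, n, Metric.mem_ball.mp h1, Metric.mem_ball.mp h2,
      Metric.mem_ball.mp h3, Metric.mem_ball.mp h4⟩
  have pip_d : ∀ (a b c d e f g h : X) (ε : ℝ), 0 < ε →
      ∃ (x : X) (m n p : ℤ), dist x a < ε ∧ dist (iterZ T m x) b < ε ∧
        dist (iterZ T n x) c < ε ∧ dist (iterZ T (m + n) x) d < ε ∧
        dist (iterZ T p x) e < ε ∧ dist (iterZ T (m + p) x) f < ε ∧
        dist (iterZ T (n + p) x) g < ε ∧ dist (iterZ T (m + n + p) x) h < ε := by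
    intro a b c d e f g h ε hε
    obtain ⟨x, m, n, p, h1, h2, h3, h4, h5, h6, h7, h8⟩ :=
      pip_hit T hmin hwm
        Metric.isOpen_ball (Metric.nonempty_ball.mpr hε)
        Metric.isOpen_ball (Metric.nonempty_ball.mpr hε)
        Metric.isOpen_ball (Metric.nonempty_ball.mpr hε)
        Metric.isOpen_ball (Metric.nonempty_ball.mpr hε)
        Metric.isOpen_ball (Metric.nonempty_ball.mpr hε)
        Metric.isOpen_ball (Metric.nonempty_ball.mpr hε)
        Metric.isOpen_ball (Metric.nonempty_ball.mpr hε)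
        (Metric.isOpen_ball (x := h)) (Metric.nonempty_ball.mpr hε)
    exact ⟨x, m, n, p, Metric.mem_ball.mp h1, Metric.mem_ball.mp h2,
      Metric.mem_ball.mp h3, Metric.mem_ball.mp h4, Metric.mem_ball.mp h5,
      Metric.mem_ball.mp h6, Metric.mem_ball.mp h7, Metric.mem_ball.mp h8⟩
  have hPara : Para T = Set.univ := by
    refine Set.eq_univ_iff_forall.mpr fun q => ?_
    obtain ⟨a, b, c, d⟩ := q
    rw [Para, Metric.mem_closure_iff]
    intro ε hε
    obtain ⟨x, m, n, h1, h2, h3, h4⟩ := para_d a b c d ε hε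
    refine ⟨_, ⟨x, m, n, rfl⟩, ?_⟩
    simp only [Prod.dist_eq, max_lt_iff]
    exact ⟨by rw [dist_comm]; exact h1, by rw [dist_comm]; exact h2,
      by rw [dist_comm]; exact h3, by rw [dist_comm]; exact h4⟩
  have hPip : Pip T = Set.univ := by
    refine Set.eq_univ_iff_forall.mpr fun q => ?_
    obtain ⟨⟨a, b, c, d⟩, e, f, g, h⟩ := q
    rw [Pip, Metric.mem_closure_iff]
    intro ε hε
    obtain ⟨x, m, n, p, h1, h2, h3, h4, h5, h6, h7, h8⟩ := pip_d a b c d e f g h ε hε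
    refine ⟨_, ⟨x, m, n, p, rfl⟩, ?_⟩
    simp only [Prod.dist_eq, max_lt_iff]
    exact ⟨⟨by rw [dist_comm]; exact h1, by rw [dist_comm]; exact h2,
      by rw [dist_comm]; exact h3, by rw [dist_comm]; exact h4⟩,
      by rw [dist_comm]; exact h5, by rw [dist_comm]; exact h6,
      by rw [dist_comm]; exact h7, by rw [dist_comm]; exact h8⟩
  have hRP : ∀ x y : X, RP T x y := by
    intro x y ε hε
    obtain ⟨x0, m, n, h1, h2, h3, h4⟩ := para_d x y x x (ε / 2) (by linarith)
    refine ⟨x0, iterZ T m x0, n, by linarith, by linarith, ?_⟩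
    have e1 : iterZ T n (iterZ T m x0) = iterZ T (m + n) x0 := by
      rw [iterZ_add, add_comm]
    calc dist (iterZ T n x0) (iterZ T n (iterZ T m x0))
        ≤ dist (iterZ T n x0) x + dist x (iterZ T n (iterZ T m x0)) :=
          dist_triangle _ _ _
      _ < ε := by rw [e1, dist_comm x]; linarith
  have hRP2 : ∀ x y : X, RP2 T x y := by
    intro x y ε hε
    obtain ⟨x0, m0, n0, p0, h1, h2, h3, h4, h5, h6, h7, h8⟩ :=
      pip_d x y x x x x x x (ε / 2) (by linarith)
    refine ⟨x0, iterZ T m0 x0, n0, p0, by linarith, by linarith, ?_, ?_, ?_⟩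
    · have e1 : iterZ T n0 (iterZ T m0 x0) = iterZ T (m0 + n0) x0 := by
        rw [iterZ_add, add_comm]
      calc dist (iterZ T n0 x0) (iterZ T n0 (iterZ T m0 x0))
          ≤ dist (iterZ T n0 x0) x + dist x (iterZ T n0 (iterZ T m0 x0)) :=
            dist_triangle _ _ _
        _ < ε := by rw [e1, dist_comm x]; linarith
    · have e1 : iterZ T p0 (iterZ T m0 x0) = iterZ T (m0 + p0) x0 := by
        rw [iterZ_add, add_comm]
      calc dist (iterZ T p0 x0) (iterZ T p0 (iterZ T m0 x0))
          ≤ dist (iterZ T p0 x0) x + dist x (iterZ T p0 (iterZ T m0 x0)) :=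
            dist_triangle _ _ _
        _ < ε := by rw [e1, dist_comm x]; linarith
    · have e1 : iterZ T (n0 + p0) (iterZ T m0 x0) = iterZ T (m0 + n0 + p0) x0 := by
        rw [iterZ_add]; exact iterZ_congr T (by ring) x0
      calc dist (iterZ T (n0 + p0) x0) (iterZ T (n0 + p0) (iterZ T m0 x0))
          ≤ dist (iterZ T (n0 + p0) x0) x + dist x (iterZ T (n0 + p0) (iterZ T m0 x0)) :=
            dist_triangle _ _ _
        _ < ε := by rw [e1, dist_comm x]; linarith
  have hRP2S : ∀ x y : X, RP2S T x y := by
    intro x y ε hε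
    obtain ⟨x0, m0, n0, p0, h1, h2, h3, h4, h5, h6, h7, h8⟩ :=
      pip_d x y y y y y y y ε hε
    refine ⟨x0, iterZ T m0 x0, n0, p0, h1, h2, h3, h5, h7, ?_, ?_, ?_⟩
    · rw [iterZ_add, show n0 + m0 = m0 + n0 from add_comm _ _]; exact h4
    · rw [iterZ_add, show p0 + m0 = m0 + p0 from add_comm _ _]; exact h6
    · rw [iterZ_add, show n0 + p0 + m0 = m0 + n0 + p0 from by ring]; exact h8
  exact ⟨hPara, hPip, hRP, hRP2, hRP2S⟩
end

section
/- Let X be a compact metrizable abelian topological group (written multiplicatively), let α ∈ X be such that {α^n : n ∈ ℤ} is dense in X, and let T : X → X be the homeomorphism x ↦ α·x (a minimal rotation). Then 𝒫 = {(x, s·x, t·x, s·t·x) : x,s,t ∈ X} and 𝒬 = {(x, s·x, t·x, s·t·x, u·x, s·u·x, t·u·x, s·t·u·x) : x,s,t,u ∈ X}. -/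
open Filter Topology

/- The maps `(x, s, t) ↦ (x, sx, tx, stx)` and
`(x, s, t, u) ↦ (x, sx, tx, stx, ux, sux, tux, stux)` are continuous on a compact space, so
their ranges are closed; restricted to `s, t, u` in the dense orbit `{αⁿ}` of `1` they
parametrize exactly the generators of `𝒫` and `𝒬`, so the closures are the full ranges. -/

theorem closure_image_eq_range_of_dense {Y Z : Type*} [TopologicalSpace Y] [CompactSpace Y]
    [TopologicalSpace Z] [T2Space Z] {f : Y → Z} (hf : Continuous f) {D : Set Y}
    (hD : Dense D) : closure (f '' D) = Set.range f := by
  rw [← closure_image_closure hf, hD.closure_eq, Set.image_univ]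
  exact (isCompact_range hf).isClosed.closure_eq

section Rotation

variable {G : Type*} [Group G]

def parallelogramMap (p : G × G × G) : G × G × G × G :=
  (p.1, p.2.1 * p.1, p.2.2 * p.1, p.2.1 * p.2.2 * p.1)

def parallelepipedMap (p : G × G × G × G) : (G × G × G × G) × (G × G × G × G) :=
  (parallelogramMap (p.1, p.2.1, p.2.2.1),
    (p.2.2.2 * p.1, p.2.1 * p.2.2.2 * p.1, p.2.2.1 * p.2.2.2 * p.1,
      p.2.1 * p.2.2.1 * p.2.2.2 * p.1))

theorem range_parallelogramMap :
    Set.range (parallelogramMap (G := G)) =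
      {q | ∃ x s t : G, q = (x, s * x, t * x, s * t * x)} := by
  ext q
  simp [parallelogramMap, eq_comm]

theorem range_parallelepipedMap :
    Set.range (parallelepipedMap (G := G)) =
      {q | ∃ x s t u : G, q = ((x, s * x, t * x, s * t * x),
        (u * x, s * u * x, t * u * x, s * t * u * x))} := by
  ext q
  simp [parallelepipedMap, parallelogramMap, eq_comm]

variable [TopologicalSpace G] [ContinuousMul G]

theorem iterZ_mulLeft (α : G) (n : ℤ) (x : G) :
    iterZ (Homeomorph.mulLeft α) n x = α ^ n * x := by
  simp [iterZ, Homeomorph.mulLeft]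

theorem continuous_parallelogramMap : Continuous (parallelogramMap (G := G)) := by
  unfold parallelogramMap; fun_prop

theorem continuous_parallelepipedMap : Continuous (parallelepipedMap (G := G)) := by
  unfold parallelepipedMap parallelogramMap; fun_prop

theorem para_mulLeft (α : G) :
    Para (Homeomorph.mulLeft α) = closure (parallelogramMap ''
      (Set.univ ×ˢ Set.range (α ^ · : ℤ → G) ×ˢ Set.range (α ^ · : ℤ → G))) := by
  refine congrArg closure (Set.ext fun q => ?_)
  simp [parallelogramMap, iterZ_mulLeft, zpow_add, mul_assoc, eq_comm]

theorem pip_mulLeft (α : G) :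
    Pip (Homeomorph.mulLeft α) = closure (parallelepipedMap '' (Set.univ ×ˢ
      Set.range (α ^ · : ℤ → G) ×ˢ Set.range (α ^ · : ℤ → G) ×ˢ Set.range (α ^ · : ℤ → G))) := by
  refine congrArg closure (Set.ext fun q => ?_)
  simp [parallelepipedMap, parallelogramMap, iterZ_mulLeft, zpow_add, mul_assoc, eq_comm]

end Rotation

theorem stmt19_general {X : Type*} [TopologicalSpace X] [CompactSpace X]
    [TopologicalSpace.MetrizableSpace X]
    [CommGroup X] [IsTopologicalGroup X]
    (α : X) (hα : Dense (Set.range fun n : ℤ => α ^ n)) :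
    Para (Homeomorph.mulLeft α) =
      {q : X × X × X × X | ∃ x s t : X, q = (x, s * x, t * x, s * t * x)} ∧
    Pip (Homeomorph.mulLeft α) =
      {q : (X × X × X × X) × (X × X × X × X) | ∃ x s t u : X,
        q = ((x, s * x, t * x, s * t * x),
             (u * x, s * u * x, t * u * x, s * t * u * x))} := by
  refine ⟨?_, ?_⟩
  · rw [para_mulLeft, ← range_parallelogramMap]
    exact closure_image_eq_range_of_dense continuous_parallelogramMap
      (dense_univ.prod (hα.prod hα))
  · rw [pip_mulLeft, ← range_parallelepipedMap]
    exact closure_image_eq_range_of_dense continuous_parallelepipedMap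
      (dense_univ.prod (hα.prod (hα.prod hα)))

/-- For a minimal rotation on a compact metrizable abelian group,
`𝒫 = {(x, sx, tx, stx)}` and `𝒬 = {(x, sx, tx, stx, ux, sux, tux, stux)}`. -/
theorem stmt19 {X : Type*} [TopologicalSpace X] [CompactSpace X]
    [TopologicalSpace.MetrizableSpace X] [Nonempty X]
    [CommGroup X] [IsTopologicalGroup X]
    (α : X) (hα : Dense (Set.range fun n : ℤ => α ^ n)) :
    Para (Homeomorph.mulLeft α) =
      {q : X × X × X × X | ∃ x s t : X, q = (x, s * x, t * x, s * t * x)} ∧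
    Pip (Homeomorph.mulLeft α) =
      {q : (X × X × X × X) × (X × X × X × X) | ∃ x s t u : X,
        q = ((x, s * x, t * x, s * t * x),
             (u * x, s * u * x, t * u * x, s * t * u * x))} :=
  stmt19_general α hα
end
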